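/- arXiv:2305.00342 — 3 statements merged into one kernel-verified Lean document; each statement's English description precedes it below -/
import Mathlib

section
/- Every finitely generated torsion-free nilpotent group admits a left-invariant total order. -/
/-!
A positive cone `P` (a subsemigroup with `G \ {1} = P ⊔ P⁻¹`) yields the left-invariant order
`a < b ↔ a⁻¹ * b ∈ P`. Cones pull back along injective homomorphisms, and if `K ↪ G ↠ Q` with
cones on `K` and `Q`, comparing first in `Q` and then in `K` gives a cone on `G`.
A torsion-free abelian group has a cone: a maximal subsemigroup avoiding `1` (Zorn).
In a torsion-free group `G` the factor `ζ (i+1) / ζ i` of the upper central series is a subgroup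
of the centre of `G ⧸ ζ i`, and it is torsion-free (Mal'cev) because `⁅x ^ n, y⁆ ≡ ⁅x, y⁆ ^ n`
modulo `ζ (i-1)` when `x ∈ ζ (i+1)`. Climbing the series up to `ζ c = G` gives a cone on `G`.
-/

open scoped commutatorElement

structure IsPositiveCone {G : Type*} [Group G] (P : Set G) : Prop where
  mul_mem {a b : G} : a ∈ P → b ∈ P → a * b ∈ P
  one_notMem : (1 : G) ∉ P
  mem_or_inv_mem {a : G} : a ≠ 1 → a ∈ P ∨ a⁻¹ ∈ P

namespace IsPositiveCone

variable {G H : Type*} [Group G] [Group H]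

theorem preimage {P : Set H} (hP : IsPositiveCone P) {f : G →* H} (hf : Function.Injective f) :
    IsPositiveCone (f ⁻¹' P) where
  mul_mem ha hb := by simpa using hP.mul_mem ha hb
  one_notMem := by simpa using hP.one_notMem
  mem_or_inv_mem ha := by simpa using hP.mem_or_inv_mem ((map_ne_one_iff f hf).2 ha)

theorem lex {f : G →* H} {P : Set f.ker} {Q : Set H} (hP : IsPositiveCone P)
    (hQ : IsPositiveCone Q) : IsPositiveCone (Subtype.val '' P ∪ f ⁻¹' Q) where
  mul_mem := by
    rintro a b (⟨a, ha, rfl⟩ | ha) (⟨b, hb, rfl⟩ | hb)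
    · exact .inl ⟨a * b, hP.mul_mem ha hb, rfl⟩
    · exact .inr (by simpa [f.mem_ker.1 a.2] using hb)
    · exact .inr (by simpa [f.mem_ker.1 b.2] using ha)
    · exact .inr (by simpa using hQ.mul_mem ha hb)
  one_notMem := by
    rintro (⟨a, ha, h⟩ | h)
    · exact hP.one_notMem (by rwa [show a = 1 from Subtype.ext h] at ha)
    · exact hQ.one_notMem (by simpa using h)
  mem_or_inv_mem {a} ha := by
    by_cases hker : f a = 1
    · rcases hP.mem_or_inv_mem (a := ⟨a, hker⟩) (by simpa [Subtype.ext_iff] using ha) with h | h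
      · exact .inl (.inl ⟨_, h, rfl⟩)
      · exact .inr (.inl ⟨_, h, rfl⟩)
    · exact (hQ.mem_or_inv_mem hker).imp .inr fun h => .inr (by simpa using h)

theorem isStrictTotalOrder {P : Set G} (hP : IsPositiveCone P) :
    IsStrictTotalOrder G (fun a b => a⁻¹ * b ∈ P) where
  irrefl a := by simpa using hP.one_notMem
  trans a b c hab hbc := by simpa [mul_assoc] using hP.mul_mem hab hbc
  trichotomous a b hab hba := by
    by_contra hne
    rcases hP.mem_or_inv_mem (a := a⁻¹ * b) (by rwa [ne_eq, inv_mul_eq_one]) with h | h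
    · exact hab h
    · exact hba (by simpa using h)

end IsPositiveCone

def LeftOrderable (G : Type*) [Group G] : Prop :=
  ∃ P : Set G, IsPositiveCone P

namespace LeftOrderable

variable {G H : Type*} [Group G] [Group H]

theorem of_injective (h : LeftOrderable H) {f : G →* H} (hf : Function.Injective f) :
    LeftOrderable G :=
  let ⟨_, hP⟩ := h
  ⟨_, hP.preimage hf⟩

theorem of_ker (f : G →* H) (hker : LeftOrderable f.ker) (hH : LeftOrderable H) :
    LeftOrderable G :=
  let ⟨_, hP⟩ := hker
  let ⟨_, hQ⟩ := hH
  ⟨_, hP.lex hQ⟩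

theorem exists_strictTotalOrder_mul_left (h : LeftOrderable G) :
    ∃ lt : G → G → Prop, IsStrictTotalOrder G lt ∧ ∀ a b c : G, lt a b → lt (c * a) (c * b) :=
  let ⟨_, hP⟩ := h
  ⟨_, hP.isStrictTotalOrder, fun a b c h => by simpa [mul_assoc] using h⟩

end LeftOrderable

section TorsionFreeAbelian

def IsSubsemigroupAvoidingOne {M : Type*} [Monoid M] (S : Set M) : Prop :=
  (∀ a ∈ S, ∀ b ∈ S, a * b ∈ S) ∧ (1 : M) ∉ S

theorem IsSubsemigroupAvoidingOne.pow_succ_mem {M : Type*} [Monoid M] {S : Set M}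
    (hS : IsSubsemigroupAvoidingOne S) {a : M} (ha : a ∈ S) (n : ℕ) : a ^ (n + 1) ∈ S := by
  induction n with
  | zero => simpa using ha
  | succ n ih => exact pow_succ a (n + 1) ▸ hS.1 _ ih _ ha

theorem exists_maximal_isSubsemigroupAvoidingOne (M : Type*) [Monoid M] :
    ∃ S : Set M, Maximal IsSubsemigroupAvoidingOne S := by
  refine zorn_subset _ fun c hc hchain => ⟨⋃₀ c, ⟨?_, ?_⟩, fun s => Set.subset_sUnion_of_mem⟩
  · rintro a ⟨s, hs, has⟩ b ⟨t, ht, hbt⟩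
    rcases hchain.total hs ht with h | h
    · exact Set.subset_sUnion_of_mem ht ((hc ht).1 a (h has) b hbt)
    · exact Set.subset_sUnion_of_mem hs ((hc hs).1 a has b (h hbt))
  · rintro ⟨s, hs, h1⟩
    exact (hc hs).2 h1

variable {A : Type*} [Group A] [IsMulCommutative A] [IsMulTorsionFree A]

theorem exists_mul_pow_succ_eq_one_of_maximal {S : Set A}
    (hS : Maximal IsSubsemigroupAvoidingOne S) {x : A} (hx : x ≠ 1) (hxS : x ∉ S) :
    ∃ s ∈ S, ∃ n : ℕ, s * x ^ (n + 1) = 1 := by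
  by_contra! hno
  let T : Set A := {z | ∃ s ∈ S, ∃ n : ℕ, s * x ^ n = z} ∪ Set.range fun n : ℕ => x ^ (n + 1)
  have hT : IsSubsemigroupAvoidingOne T := by
    refine ⟨?_, ?_⟩
    · rintro _ (⟨s, hs, n, rfl⟩ | ⟨n, rfl⟩) _ (⟨t, ht, m, rfl⟩ | ⟨m, rfl⟩)
      · exact .inl ⟨s * t, hS.1.1 s hs t ht, n + m, by rw [pow_add]; ac_rfl⟩
      · exact .inl ⟨s, hs, n + (m + 1), by rw [pow_add, mul_assoc]⟩
      · exact .inl ⟨t, ht, n + 1 + m, by rw [pow_add]; ac_rfl⟩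
      · exact .inr ⟨n + m + 1, by rw [← pow_add]; ring_nf⟩
    · rintro (⟨s, hs, _ | n, h⟩ | ⟨n, h⟩)
      · obtain rfl : s = 1 := by simpa using h
        exact hS.1.2 hs
      · exact hno s hs n h
      · exact hx ((pow_eq_one_iff_left n.succ_ne_zero).1 h)
  have hST : S ⊆ T := fun s hs => .inl ⟨s, hs, 0, by simp⟩
  exact hxS (hS.2 hT hST (.inr ⟨0, by simp⟩))

theorem LeftOrderable.of_isMulTorsionFree : LeftOrderable A := by
  obtain ⟨S, hS⟩ := exists_maximal_isSubsemigroupAvoidingOne A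
  refine ⟨S, ⟨fun ha hb => hS.1.1 _ ha _ hb, hS.1.2, fun {x} hx => ?_⟩⟩
  by_contra! hxS
  obtain ⟨s, hs, n, hsx⟩ := exists_mul_pow_succ_eq_one_of_maximal hS hx hxS.1
  obtain ⟨t, ht, m, htx⟩ := exists_mul_pow_succ_eq_one_of_maximal hS (inv_ne_one.2 hx) hxS.2
  have : s ^ (m + 1) * t ^ (n + 1) = 1 := by
    rw [eq_inv_of_mul_eq_one_left hsx, eq_inv_of_mul_eq_one_left htx]
    group
  exact hS.1.2 (this ▸ hS.1.1 _ (hS.1.pow_succ_mem hs m) _ (hS.1.pow_succ_mem ht n))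

end TorsionFreeAbelian

theorem commutatorElement_pow_left_of_commute {G : Type*} [Group G] {x y : G}
    (h : Commute x ⁅x, y⁆) (n : ℕ) : ⁅x ^ n, y⁆ = ⁅x, y⁆ ^ n := by
  induction n with
  | zero => simp
  | succ n ih =>
    rw [pow_succ', commutatorElement_mul_left_eq_conj_mul, ih, (h.pow_right n).eq,
      mul_inv_cancel_right, pow_succ]

section UpperCentralSeries

variable {G : Type*} [Group G]

local notation "ζ" => Subgroup.upperCentralSeries G

theorem mk_mem_center_iff_mem_upperCentralSeries_succ {i : ℕ} {x : G} :
    (x : G ⧸ ζ i) ∈ Subgroup.center (G ⧸ ζ i) ↔ x ∈ ζ (i + 1) :=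
  (SetLike.ext_iff.1 (Subgroup.upperCentralSeriesStep_eq_comap_center (ζ i)) x).symm

-- Torsion-freeness of `G` is not phrased as `IsMulTorsionFree G`: for non-abelian `G` that class
-- asserts uniqueness of roots, which is stronger.
theorem mem_upperCentralSeries_of_pow_mem (htf : ∀ g : G, g ≠ 1 → ¬IsOfFinOrder g) {n : ℕ}
    (hn : n ≠ 0) {i : ℕ} {x : G} (hx : x ∈ ζ (i + 1)) (hxn : x ^ n ∈ ζ i) : x ∈ ζ i := by
  induction i generalizing x with
  | zero =>
    rw [Subgroup.upperCentralSeries_zero, Subgroup.mem_bot] at hxn ⊢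
    by_contra hx1
    exact htf x hx1 (isOfFinOrder_iff_pow_eq_one.2 ⟨n, n.pos_of_ne_zero hn, hxn⟩)
  | succ i ih =>
    rw [Subgroup.mem_upperCentralSeries_succ_iff] at hx hxn ⊢
    refine fun y => ih (hx y) ?_
    let f := QuotientGroup.mk' (ζ i)
    have hcomm : Commute (f x) ⁅f x, f y⁆ :=
      Subgroup.mem_center_iff.1 (mk_mem_center_iff_mem_upperCentralSeries_succ.2 (hx y)) (f x)
    rw [← QuotientGroup.ker_mk' (ζ i), MonoidHom.mem_ker, map_pow, map_commutatorElement,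
      ← commutatorElement_pow_left_of_commute hcomm, ← map_pow, ← map_commutatorElement,
      ← MonoidHom.mem_ker, QuotientGroup.ker_mk']
    exact hxn y

open scoped IsMulCommutative in
theorem isMulTorsionFree_center_quotient_upperCentralSeries
    (htf : ∀ g : G, g ≠ 1 → ¬IsOfFinOrder g) (i : ℕ) :
    IsMulTorsionFree (Subgroup.center (G ⧸ ζ i)) := by
  refine .of_not_isOfFinOrder ?_
  rintro ⟨a, ha⟩ ha1 hfin
  apply ha1
  induction a using QuotientGroup.induction_on with | H x => ?_
  obtain ⟨n, hn, hxn⟩ := isOfFinOrder_iff_pow_eq_one.1 hfin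
  have hxn : x ^ n ∈ ζ i := by simpa [Subtype.ext_iff, ← QuotientGroup.mk_pow] using hxn
  have hx := mem_upperCentralSeries_of_pow_mem htf hn.ne'
    (mk_mem_center_iff_mem_upperCentralSeries_succ.1 ha) hxn
  exact Subtype.ext ((QuotientGroup.eq_one_iff x).2 hx)

theorem leftOrderable_upperCentralSeries (htf : ∀ g : G, g ≠ 1 → ¬IsOfFinOrder g) (i : ℕ) :
    LeftOrderable (ζ i) := by
  induction i with
  | zero => exact ⟨∅, ⟨fun h => h.elim, id, fun {a} ha => (ha (Subtype.ext a.2)).elim⟩⟩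
  | succ i ih =>
    let f : ζ (i + 1) →* Subgroup.center (G ⧸ ζ i) :=
      ((QuotientGroup.mk' (ζ i)).comp (ζ (i + 1)).subtype).codRestrict _
        fun x => mk_mem_center_iff_mem_upperCentralSeries_succ.2 x.2
    let g : f.ker →* ζ i := ((ζ (i + 1)).subtype.comp f.ker.subtype).codRestrict _
      fun x => (QuotientGroup.eq_one_iff _).1 (congrArg Subtype.val (f.mem_ker.1 x.2))
    have hg : Function.Injective g := fun a b h => by
      ext
      exact congrArg (Subtype.val : ζ i → G) h
    have := isMulTorsionFree_center_quotient_upperCentralSeries htf i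
    exact .of_ker f (ih.of_injective hg) .of_isMulTorsionFree

end UpperCentralSeries

theorem stmt8_general {G : Type*} [Group G] [Group.IsNilpotent G]
    (htf : ∀ g : G, g ≠ 1 → ¬IsOfFinOrder g) :
    ∃ lt : G → G → Prop, IsStrictTotalOrder G lt ∧
      ∀ a b c : G, lt a b → lt (c * a) (c * b) := by
  obtain ⟨c, hc⟩ := Group.IsNilpotent.nilpotent G
  let f : G →* Subgroup.upperCentralSeries G c :=
    (MonoidHom.id G).codRestrict _ fun g => hc ▸ Subgroup.mem_top g
  have hf : Function.Injective f := fun a b h => congrArg Subtype.val h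
  exact ((leftOrderable_upperCentralSeries htf c).of_injective hf).exists_strictTotalOrder_mul_left

/-- Every finitely generated torsion-free nilpotent group admits a left-invariant
total order. -/
theorem stmt8 {G : Type*} [Group G] [Group.IsNilpotent G] [Group.FG G]
    (htf : ∀ g : G, g ≠ 1 → ¬IsOfFinOrder g) :
    ∃ lt : G → G → Prop, IsStrictTotalOrder G lt ∧
      ∀ a b c : G, lt a b → lt (c * a) (c * b) :=
  stmt8_general htf
end

section
/- For integers k ≥ 1, positive real numbers p₁, …, pₖ, r with 1/p₁ + ⋯ + 1/pₖ + 1/r < 1, the series ∑ over (i₁,…,iₖ,j) ∈ ℤ^{k+1} of 1/(|i₁|^{p₁} + ⋯ + |iₖ|^{pₖ} + |j|^r + 1) converges. -/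
/-!
Treat `j` as one more coordinate with exponent `r`. Pick `s` with `∑ 1/pᵢ < s < 1` and weights
`wᵢ = 1/(s pᵢ)`, so that `∑ wᵢ ≤ 1` while `pᵢ wᵢ = 1/s > 1`. For `T = ∑ aᵢ + 1 ≥ 1` every
`aᵢ + 1 ≤ T`, hence `∏ (aᵢ + 1)^{wᵢ} ≤ T^{∑ wᵢ} ≤ T`: the summand is dominated by
`∏ (|xᵢ|^{pᵢ} + 1)^{-wᵢ}`, a product of one-variable series each comparable to `∑ |n|^{-pᵢ wᵢ}`.
-/

open Filter

theorem summable_inv_rpow_abs_rpow_add_one {p θ : ℝ} (hθ : 0 ≤ θ) (h : 1 < p * θ) :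
    Summable fun i : ℤ => ((|(i : ℝ)| ^ p + 1) ^ θ)⁻¹ := by
  refine (Real.summable_abs_int_rpow h).of_norm_bounded_eventually ?_
  filter_upwards [eventually_cofinite_ne 0] with i hi0
  have hi : 0 < |(i : ℝ)| := by positivity
  rw [Real.norm_of_nonneg (by positivity), Real.rpow_neg hi.le, Real.rpow_mul hi.le]
  gcongr
  linarith

theorem summable_pi_prod_of_nonneg {ι β : Type*} [Fintype ι] (f : ι → β → ℝ)
    (hf : ∀ i b, 0 ≤ f i b) (hs : ∀ i, Summable (f i)) :
    Summable fun x : ι → β => ∏ i, f i (x i) := by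
  classical
  refine summable_of_sum_le (c := ∏ i, ∑' b, f i b)
    (fun x => Finset.prod_nonneg fun i _ => hf i (x i)) fun u => ?_
  have hu : u ⊆ Fintype.piFinset fun i => u.image (· i) := fun x hx =>
    Fintype.mem_piFinset.2 fun i => Finset.mem_image_of_mem _ hx
  calc ∑ x ∈ u, ∏ i, f i (x i)
      ≤ ∑ x ∈ Fintype.piFinset (fun i => u.image (· i)), ∏ i, f i (x i) :=
        Finset.sum_le_sum_of_subset_of_nonneg hu fun x _ _ =>
          Finset.prod_nonneg fun i _ => hf i (x i)
    _ = ∏ i, ∑ b ∈ u.image (· i), f i b := (Finset.prod_univ_sum _ _).symm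
    _ ≤ ∏ i, ∑' b, f i b :=
        Finset.prod_le_prod (fun i _ => Finset.sum_nonneg fun b _ => hf i b)
          fun i _ => (hs i).sum_le_tsum _ fun b _ => hf i b

theorem one_div_sum_add_one_le_prod_inv_rpow {ι : Type*} [Fintype ι] (a w : ι → ℝ)
    (ha : ∀ i, 0 ≤ a i) (hw : ∀ i, 0 ≤ w i) (hw1 : ∑ i, w i ≤ 1) :
    1 / (∑ i, a i + 1) ≤ ∏ i, ((a i + 1) ^ w i)⁻¹ := by
  set T := ∑ i, a i + 1
  have hT : 1 ≤ T := by linarith [Finset.sum_nonneg fun i (_ : i ∈ Finset.univ) => ha i]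
  have hprod : ∏ i, (a i + 1) ^ w i ≤ T :=
    calc ∏ i, (a i + 1) ^ w i
        ≤ ∏ i, T ^ w i := by
          refine Finset.prod_le_prod (fun i _ => Real.rpow_nonneg (by linarith [ha i]) _)
            fun i _ => Real.rpow_le_rpow (by linarith [ha i]) ?_ (hw i)
          linarith [Finset.single_le_sum (fun j (_ : j ∈ Finset.univ) => ha j) (Finset.mem_univ i)]
      _ = T ^ ∑ i, w i := (Real.rpow_sum_of_pos (by linarith) _ _).symm
      _ ≤ T := by simpa using Real.rpow_le_rpow_of_exponent_le hT hw1
  rw [Finset.prod_inv_distrib, one_div]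
  exact inv_anti₀ (Finset.prod_pos fun i _ => Real.rpow_pos_of_pos (by linarith [ha i]) _) hprod

theorem summable_one_div_sum_abs_rpow_add_one {ι : Type*} [Fintype ι] (p : ι → ℝ)
    (hp : ∀ i, 0 < p i) (h : ∑ i, 1 / p i < 1) :
    Summable fun x : ι → ℤ => 1 / (∑ i, |(x i : ℝ)| ^ p i + 1) := by
  obtain ⟨s, hSs, hs1⟩ := exists_between h
  have hs : 0 < s := (Finset.sum_nonneg fun i _ => (one_div_pos.2 (hp i)).le).trans_lt hSs
  set w : ι → ℝ := fun i => 1 / (s * p i)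
  have hw : ∀ i, 0 ≤ w i := fun i => (one_div_pos.2 (mul_pos hs (hp i))).le
  have hpw : ∀ i, 1 < p i * w i := fun i => by
    rw [mul_one_div, div_mul_cancel_right₀ (hp i).ne']
    exact (one_lt_inv₀ hs).2 hs1
  have hw1 : ∑ i, w i ≤ 1 := by
    have hsum : ∑ i, w i = (∑ i, 1 / p i) / s := by
      rw [Finset.sum_div]
      exact Finset.sum_congr rfl fun i _ => by rw [div_div, mul_comm]
    rw [hsum, div_le_one hs]
    exact hSs.le
  have hdom : Summable fun x : ι → ℤ => ∏ i, ((|(x i : ℝ)| ^ p i + 1) ^ w i)⁻¹ :=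
    summable_pi_prod_of_nonneg (fun i (b : ℤ) => ((|(b : ℝ)| ^ p i + 1) ^ w i)⁻¹)
      (fun i b => by positivity) fun i => summable_inv_rpow_abs_rpow_add_one (hw i) (hpw i)
  refine hdom.of_nonneg_of_le (fun x => by positivity) fun x => ?_
  exact one_div_sum_add_one_le_prod_inv_rpow (fun i => |(x i : ℝ)| ^ p i) w
    (fun i => by positivity) hw hw1

theorem stmt9_general (k : ℕ) (p : Fin k → ℝ) (r : ℝ)
    (hp : ∀ n, 0 < p n) (hr : 0 < r)
    (hsub : (∑ n, 1 / p n) + 1 / r < 1) :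
    Summable (fun x : (Fin k → ℤ) × ℤ =>
      1 / ((∑ n, |(x.1 n : ℝ)| ^ p n) + |(x.2 : ℝ)| ^ r + 1)) := by
  let q : Option (Fin k) → ℝ := fun i => i.elim r p
  have hq : ∀ i, 0 < q i := fun i => by cases i <;> simp [q, hp, hr]
  have hsum : ∑ i, 1 / q i < 1 := by
    simp only [Fintype.sum_option, q, Option.elim]
    linarith
  let e : (Fin k → ℤ) × ℤ ≃ (Option (Fin k) → ℤ) :=
    (Equiv.prodComm _ _).trans (Equiv.piOptionEquivProd (β := fun _ => ℤ)).symm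
  refine (e.summable_iff.2 (summable_one_div_sum_abs_rpow_add_one q hq hsum)).congr fun x => ?_
  simp [e, q, Fintype.sum_option, add_comm]

/-- For `k ≥ 1` and positive reals `p₁, …, pₖ, r` with `1/p₁ + ⋯ + 1/pₖ + 1/r < 1`,
the series `∑_{(i₁,…,iₖ,j) ∈ ℤ^{k+1}} 1/(|i₁|^{p₁} + ⋯ + |iₖ|^{pₖ} + |j|^r + 1)`
converges. -/
theorem stmt9 (k : ℕ) (hk : 1 ≤ k) (p : Fin k → ℝ) (r : ℝ)
    (hp : ∀ n, 0 < p n) (hr : 0 < r)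
    (hsub : (∑ n, 1 / p n) + 1 / r < 1) :
    Summable (fun x : (Fin k → ℤ) × ℤ =>
      1 / ((∑ n, |(x.1 n : ℝ)| ^ p n) + |(x.2 : ℝ)| ^ r + 1)) :=
  stmt9_general k p r hp hr hsub
end

section
/- Let G be a torsion-free nilpotent group in which the quotient of any subgroup by its center is torsion-free. If f, g ∈ G satisfy [f, g^m] = e for some nonzero integer m, then [f, g] = e. -/
open scoped commutatorElement

/-- A monoid is torsion-free if no nontrivial element has finite order
(the definition `Monoid.IsTorsionFree` of the older Mathlib, since removed). -/
def Monoid.IsTorsionFree (G : Type*) [Monoid G] : Prop :=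
  ∀ g : G, g ≠ 1 → ¬IsOfFinOrder g

/-
Write `b = [a, g]`. If `b` commutes with `g`, then `a g^m a⁻¹ = (b g)^m = b^m g^m`, so
`[a, g^m] = b^m`; in a torsion-free group `[a, g^m] = 1` then forces `b = 1`.
The hypothesis that `b` commutes with `g` is supplied by descending induction along the lower
central series: `b` lies one step deeper than `a`, and it still commutes with `g^m`.
-/

theorem Monoid.IsTorsionFree.eq_one_of_zpow_eq_one {G : Type*} [Group G]
    (htf : Monoid.IsTorsionFree G) {b : G} {m : ℤ} (hm : m ≠ 0) (h : b ^ m = 1) : b = 1 := by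
  by_contra hb
  exact htf b hb (isOfFinOrder_iff_zpow_eq_one.mpr ⟨m, hm, h⟩)

section Commutator

variable {G : Type*} [Group G] {a g x : G}

theorem Commute.commutatorElement_right (ha : Commute x a) (hg : Commute x g) :
    Commute x ⁅a, g⁆ := by
  rw [commutatorElement_def]
  exact ((ha.mul_right hg).mul_right ha.inv_right).mul_right hg.inv_right

theorem commutatorElement_zpow_right_of_commute (h : Commute ⁅a, g⁆ g) (m : ℤ) :
    ⁅a, g ^ m⁆ = ⁅a, g⁆ ^ m := by
  have hconj : a * g * a⁻¹ = ⁅a, g⁆ * g := by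
    rw [commutatorElement_def]
    group
  calc ⁅a, g ^ m⁆ = (a * g * a⁻¹) ^ m * (g ^ m)⁻¹ := by
        rw [conj_zpow, commutatorElement_def]
    _ = ⁅a, g⁆ ^ m := by
        rw [hconj, h.mul_zpow, mul_inv_cancel_right]

end Commutator

theorem commutatorElement_eq_one_of_zpow_of_mem_lowerCentralSeries {G : Type*} [Group G]
    (htf : Monoid.IsTorsionFree G) (g : G) {m : ℤ} (hm : m ≠ 0) (d : ℕ) :
    ∀ k, (⊤ : Subgroup G).lowerCentralSeries (k + d) = ⊥ →
      ∀ a ∈ (⊤ : Subgroup G).lowerCentralSeries k, ⁅a, g ^ m⁆ = 1 → ⁅a, g⁆ = 1 := by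
  induction d with
  | zero =>
    intro k hk a ha _
    rw [Nat.add_zero] at hk
    rw [hk, Subgroup.mem_bot] at ha
    rw [ha, commutatorElement_one_left]
  | succ d ih =>
    intro k hk a ha hag
    have hb : ⁅a, g⁆ ∈ (⊤ : Subgroup G).lowerCentralSeries (k + 1) :=
      Subgroup.commutator_mem_commutator ha (Subgroup.mem_top g)
    have hbgm : Commute ⁅a, g⁆ (g ^ m) :=
      (Commute.commutatorElement_right (commutatorElement_eq_one_iff_commute.mp hag).symm
        ((Commute.refl g).zpow_left m)).symm
    have hbg : Commute ⁅a, g⁆ g := commutatorElement_eq_one_iff_commute.mp <|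
      ih (k + 1) (by rwa [Nat.add_right_comm]) _ hb (commutatorElement_eq_one_iff_commute.mpr hbgm)
    refine htf.eq_one_of_zpow_eq_one hm ?_
    rw [← commutatorElement_zpow_right_of_commute hbg, hag]

theorem stmt18_general {G : Type*} [Group G] [Group.IsNilpotent G]
    (htf : Monoid.IsTorsionFree G)
    (f g : G) (m : ℤ) (hm : m ≠ 0) (h : ⁅f, g ^ m⁆ = 1) : ⁅f, g⁆ = 1 := by
  obtain ⟨n, hn⟩ := Subgroup.nilpotent_iff_lowerCentralSeries.mp ‹Group.IsNilpotent G›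
  exact commutatorElement_eq_one_of_zpow_of_mem_lowerCentralSeries htf g hm n 0
    (by rwa [Nat.zero_add]) f (Subgroup.mem_top f) h

/-- Let `G` be a torsion-free nilpotent group in which the quotient of any subgroup
by its center is torsion-free. If `f, g ∈ G` satisfy `[f, g^m] = e` for some nonzero
integer `m`, then `[f, g] = e`. -/
theorem stmt18 {G : Type*} [Group G] [Group.IsNilpotent G]
    (htf : Monoid.IsTorsionFree G)
    (hZ : ∀ H : Subgroup G, Monoid.IsTorsionFree (H ⧸ Subgroup.center H))
    (f g : G) (m : ℤ) (hm : m ≠ 0) (h : ⁅f, g ^ m⁆ = 1) : ⁅f, g⁆ = 1 :=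
  stmt18_general htf f g m hm h
end
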